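/- For all 1 ≤ i, j ≤ n with i ≠ j, all signs a, b ∈ {+1,−1}, and every nonzero t ∈ F, one has h_{ai,bj}(t) = I + (t−1)·E_{ai,ai} + (t−1)·E_{bj,bj} + (t⁻¹−1)·E_{−bj,−bj} + (t⁻¹−1)·E_{−ai,−ai}; in particular h_{ai,bj}(t) is a diagonal matrix, and consequently h_{ai,bj}(t) · h_{ai,bj}(u) = h_{ai,bj}(t·u) for all nonzero t, u ∈ F. -/

import Mathlib

open Matrix

/-- Index set `{-n, …, n}` for (2n+1)×(2n+1) matrices. -/
abbrev BIdx (n : ℕ) : Type := {z : ℤ // z ∈ Finset.Icc (-(n : ℤ)) (n : ℤ)}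

/-- `Eb F n p q` : the matrix with a 1 in entry (p,q) and 0 elsewhere
(rows and columns indexed by `{-n, …, n}`). -/
def Eb (F : Type*) [Field F] (n : ℕ) (p q : ℤ) : Matrix (BIdx n) (BIdx n) F :=
  Matrix.of fun r c => if ((r : ℤ) = p ∧ (c : ℤ) = q) then 1 else 0

/-- Short-root matrix `S^a_i(t) := I + 2at·E_{ai,0} − at·E_{0,−ai} − t²·E_{ai,−ai}`. -/
def Sb (F : Type*) [Field F] (n : ℕ) (a i : ℤ) (t : F) : Matrix (BIdx n) (BIdx n) F :=
  1 + (2 * (a : F) * t) • Eb F n (a * i) 0 - ((a : F) * t) • Eb F n 0 (-(a * i))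
    - t ^ 2 • Eb F n (a * i) (-(a * i))

/-- Long-root matrix `L^{a,b}_{i,j}(t) := I + at·E_{ai,−bj} − at·E_{bj,−ai}`. -/
def Lb (F : Type*) [Field F] (n : ℕ) (a b i j : ℤ) (t : F) : Matrix (BIdx n) (BIdx n) F :=
  1 + ((a : F) * t) • Eb F n (a * i) (-(b * j)) - ((a : F) * t) • Eb F n (b * j) (-(a * i))


/-- `g_{ai,bj}(t) := L^{a,b}_{i,j}(t) · L^{−a,−b}_{i,j}(−t⁻¹) · L^{a,b}_{i,j}(t)`. -/
noncomputable def gB (F : Type*) [Field F] (n : ℕ) (a b i j : ℤ) (t : F) : Matrix (BIdx n) (BIdx n) F :=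
  Lb F n a b i j t * Lb F n (-a) (-b) i j (-t⁻¹) * Lb F n a b i j t

/-- `h_{ai,bj}(t) := g_{ai,bj}(t) · g_{ai,bj}(−1)`. -/
noncomputable def hB (F : Type*) [Field F] (n : ℕ) (a b i j : ℤ) (t : F) : Matrix (BIdx n) (BIdx n) F :=
  gB F n a b i j t * gB F n a b i j (-1)

/-! With `s = ai` and `r = bj` the indices `±s, ±r` are distinct, and `L^{a,b}_{i,j}(t)`,
`L^{-a,-b}_{i,j}(-t⁻¹)` are the root elements `x(c)`, `x₋(c⁻¹)`, `c = at`, of a copy of `SL₂` acting on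
`e_{±s}, e_{±r}`. As in `SL₂`, `x(c) x₋(c⁻¹) x(c)` is a monomial (Weyl) matrix, and the product of the Weyl
matrices for `c` and `d` is diagonal, with entry `-c/d` at `s, r` and `-d/c` at `-s, -r`. For `c = at`
and `d = -a` this is `t`, resp. `t⁻¹`, since `a² = 1`; being diagonal, these matrices multiply entrywise. -/

section RootMatrices

variable (F : Type*) [Field F] (n : ℕ)

lemma Eb_mul_Eb {p q s : ℤ} (hq : q.natAbs ≤ n) : Eb F n p q * Eb F n q s = Eb F n p s := by
  ext x y
  rw [Matrix.mul_apply, Fintype.sum_eq_single (⟨q, by rw [Finset.mem_Icc]; omega⟩ : BIdx n)]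
  · simp only [Eb, Matrix.of_apply]
    split_ifs <;> simp_all
  · intro k hk
    have hkq : (k : ℤ) ≠ q := fun h => hk (Subtype.ext h)
    simp [Eb, hkq]

lemma Eb_mul_Eb_of_ne {p q q' s : ℤ} (h : q ≠ q') : Eb F n p q * Eb F n q' s = 0 := by
  ext x y
  rw [Matrix.mul_apply]
  refine Finset.sum_eq_zero fun k _ => ?_
  by_cases hk : (k : ℤ) = q
  · simp [Eb, hk, h]
  · simp [Eb, hk]

lemma Eb_self_eq_diagonal (p : ℤ) :
    Eb F n p p = diagonal fun k : BIdx n => if (k : ℤ) = p then 1 else 0 := by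
  ext x y
  by_cases hxy : x = y
  · subst hxy; simp [Eb]
  · have hxy' : (x : ℤ) ≠ y := fun h => hxy (Subtype.ext h)
    simp only [Eb, of_apply, diagonal_apply_ne _ hxy, ite_eq_right_iff, one_ne_zero]
    exact fun h => hxy' (h.1.trans h.2.symm)

def rootElt (s r : ℤ) (c : F) : Matrix (BIdx n) (BIdx n) F :=
  1 + c • Eb F n s (-r) - c • Eb F n r (-s)

def weylElt (s r : ℤ) (c : F) : Matrix (BIdx n) (BIdx n) F :=
  1 - Eb F n s s - Eb F n r r - Eb F n (-s) (-s) - Eb F n (-r) (-r)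
    + (rootElt F n s r c - 1) + (rootElt F n (-s) (-r) c⁻¹ - 1)

def torusElt (s r : ℤ) (v : F) : Matrix (BIdx n) (BIdx n) F :=
  1 + (v - 1) • Eb F n s s + (v - 1) • Eb F n r r
    + (v⁻¹ - 1) • Eb F n (-r) (-r) + (v⁻¹ - 1) • Eb F n (-s) (-s)

variable {F n} {s r : ℤ}

lemma Lb_eq_rootElt (a b i j : ℤ) (t : F) : Lb F n a b i j t = rootElt F n (a * i) (b * j) (a * t) :=
  rfl

lemma rootElt_mul_rootElt_inv_mul_rootElt (hs : s ≠ 0) (hr : r ≠ 0) (hsr : s ≠ r) (hsr' : s ≠ -r)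
    (hsn : s.natAbs ≤ n) (hrn : r.natAbs ≤ n) {c : F} (hc : c ≠ 0) :
    rootElt F n s r c * rootElt F n (-s) (-r) c⁻¹ * rootElt F n s r c = weylElt F n s r c := by
  -- `omega` decides, from the hypotheses, which products `E_{pq} E_{q'r}` vanish
  simp (disch := omega) only [rootElt, weylElt, mul_add, add_mul, mul_sub, sub_mul, mul_one, one_mul,
    smul_mul_assoc, mul_smul_comm, Eb_mul_Eb, Eb_mul_Eb_of_ne, zero_mul, neg_neg]
  match_scalars <;> field_simp <;> ring

lemma weylElt_mul_weylElt (hs : s ≠ 0) (hr : r ≠ 0) (hsr : s ≠ r) (hsr' : s ≠ -r)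
    (hsn : s.natAbs ≤ n) (hrn : r.natAbs ≤ n) (c d : F) :
    weylElt F n s r c * weylElt F n s r d = torusElt F n s r (-(c * d⁻¹)) := by
  simp (disch := omega) only [rootElt, weylElt, torusElt, mul_add, add_mul, mul_sub, sub_mul, mul_one, one_mul,
    smul_mul_assoc, mul_smul_comm, Eb_mul_Eb, Eb_mul_Eb_of_ne, neg_neg]
  match_scalars <;> field_simp <;> ring

def torusDiag (s r : ℤ) (v : F) (k : BIdx n) : F :=
  if (k : ℤ) = s ∨ (k : ℤ) = r then v else if (k : ℤ) = -r ∨ (k : ℤ) = -s then v⁻¹ else 1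

lemma torusElt_eq_diagonal (hs : s ≠ 0) (hr : r ≠ 0) (hsr : s ≠ r) (hsr' : s ≠ -r) (v : F) :
    torusElt F n s r v = diagonal (torusDiag s r v) := by
  simp only [torusElt, Eb_self_eq_diagonal, ← diagonal_one, ← diagonal_smul, diagonal_add]
  congr 1
  ext k
  simp only [torusDiag, Pi.smul_apply, smul_eq_mul]
  split_ifs <;> first | omega | ring

lemma torusDiag_mul (s r : ℤ) (t u : F) :
    torusDiag (n := n) s r (t * u) = torusDiag s r t * torusDiag s r u := by
  ext k
  simp only [torusDiag, Pi.mul_apply]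
  split_ifs <;> ring

lemma torusElt_mul (hs : s ≠ 0) (hr : r ≠ 0) (hsr : s ≠ r) (hsr' : s ≠ -r) (t u : F) :
    torusElt F n s r t * torusElt F n s r u = torusElt F n s r (t * u) := by
  simp only [torusElt_eq_diagonal hs hr hsr hsr', diagonal_mul_diagonal, torusDiag_mul]
  rfl

lemma intCast_inv_eq_self {a : ℤ} (ha : a = 1 ∨ a = -1) : (a : F)⁻¹ = a := by
  rcases ha with rfl | rfl <;> norm_num

variable {a b i j : ℤ}

lemma gB_eq_weylElt (ha : a = 1 ∨ a = -1) (hs : a * i ≠ 0) (hr : b * j ≠ 0) (hsr : a * i ≠ b * j)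
    (hsr' : a * i ≠ -(b * j)) (hsn : (a * i).natAbs ≤ n) (hrn : (b * j).natAbs ≤ n)
    {t : F} (ht : t ≠ 0) :
    gB F n a b i j t = weylElt F n (a * i) (b * j) (a * t) := by
  have hL : Lb F n (-a) (-b) i j (-t⁻¹) = rootElt F n (-(a * i)) (-(b * j)) (a * t)⁻¹ := by
    rw [Lb_eq_rootElt, mul_inv, intCast_inv_eq_self ha]
    push_cast
    simp only [neg_mul, mul_neg, neg_neg]
  rw [gB, hL, Lb_eq_rootElt]
  exact rootElt_mul_rootElt_inv_mul_rootElt hs hr hsr hsr' hsn hrn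
    (mul_ne_zero (by rcases ha with rfl | rfl <;> norm_num) ht)

lemma hB_eq_torusElt (ha : a = 1 ∨ a = -1) (hs : a * i ≠ 0) (hr : b * j ≠ 0) (hsr : a * i ≠ b * j)
    (hsr' : a * i ≠ -(b * j)) (hsn : (a * i).natAbs ≤ n) (hrn : (b * j).natAbs ≤ n)
    {t : F} (ht : t ≠ 0) :
    hB F n a b i j t = torusElt F n (a * i) (b * j) t := by
  rw [hB, gB_eq_weylElt ha hs hr hsr hsr' hsn hrn ht, gB_eq_weylElt ha hs hr hsr hsr' hsn hrn
    (neg_ne_zero.mpr one_ne_zero), weylElt_mul_weylElt hs hr hsr hsr' hsn hrn]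
  congr 1
  rcases ha with rfl | rfl <;> simp

end RootMatrices

theorem typeB_h_formula_general (F : Type*) [Field F] (n : ℕ)
    (a b : ℤ) (ha : a = 1 ∨ a = -1) (hb : b = 1 ∨ b = -1)
    (i j : ℤ) (hi1 : 1 ≤ i) (hin : i ≤ (n : ℤ)) (hj1 : 1 ≤ j) (hjn : j ≤ (n : ℤ))
    (hij : i ≠ j) (t : F) (ht : t ≠ 0) :
    hB F n a b i j t
      = 1 + (t - 1) • Eb F n (a * i) (a * i)
          + (t - 1) • Eb F n (b * j) (b * j)
          + (t⁻¹ - 1) • Eb F n (-(b * j)) (-(b * j))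
          + (t⁻¹ - 1) • Eb F n (-(a * i)) (-(a * i)) ∧
    (∃ d : BIdx n → F, hB F n a b i j t = Matrix.diagonal d) ∧
    (∀ u : F, u ≠ 0 → hB F n a b i j t * hB F n a b i j u = hB F n a b i j (t * u)) := by
  obtain ⟨hs, hsn⟩ : a * i ≠ 0 ∧ (a * i).natAbs ≤ n := by rcases ha with rfl | rfl <;> omega
  obtain ⟨hr, hrn⟩ : b * j ≠ 0 ∧ (b * j).natAbs ≤ n := by rcases hb with rfl | rfl <;> omega
  obtain ⟨hsr, hsr'⟩ : a * i ≠ b * j ∧ a * i ≠ -(b * j) := by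
    rcases ha with rfl | rfl <;> rcases hb with rfl | rfl <;> omega
  have hB_eq {v : F} (hv : v ≠ 0) := hB_eq_torusElt ha hs hr hsr hsr' hsn hrn hv
  refine ⟨hB_eq ht, ⟨_, (hB_eq ht).trans (torusElt_eq_diagonal hs hr hsr hsr' t)⟩, fun u hu => ?_⟩
  rw [hB_eq ht, hB_eq hu, hB_eq (mul_ne_zero ht hu), torusElt_mul hs hr hsr hsr']

/-- For `i ≠ j` and nonzero `t`,
`h_{ai,bj}(t) = I + (t−1)·E_{ai,ai} + (t−1)·E_{bj,bj} + (t⁻¹−1)·E_{−bj,−bj}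
  + (t⁻¹−1)·E_{−ai,−ai}`;
in particular `h_{ai,bj}(t)` is a diagonal matrix, and consequently
`h_{ai,bj}(t) · h_{ai,bj}(u) = h_{ai,bj}(t·u)` for all nonzero `t, u`. -/
theorem typeB_h_formula (F : Type*) [Field F] (n : ℕ) (hn : 1 ≤ n)
    (a b : ℤ) (ha : a = 1 ∨ a = -1) (hb : b = 1 ∨ b = -1)
    (i j : ℤ) (hi1 : 1 ≤ i) (hin : i ≤ (n : ℤ)) (hj1 : 1 ≤ j) (hjn : j ≤ (n : ℤ))
    (hij : i ≠ j) (t : F) (ht : t ≠ 0) :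
    hB F n a b i j t
      = 1 + (t - 1) • Eb F n (a * i) (a * i)
          + (t - 1) • Eb F n (b * j) (b * j)
          + (t⁻¹ - 1) • Eb F n (-(b * j)) (-(b * j))
          + (t⁻¹ - 1) • Eb F n (-(a * i)) (-(a * i)) ∧
    (∃ d : BIdx n → F, hB F n a b i j t = Matrix.diagonal d) ∧
    (∀ u : F, u ≠ 0 → hB F n a b i j t * hB F n a b i j u = hB F n a b i j (t * u)) :=
  typeB_h_formula_general F n a b ha hb i j hi1 hin hj1 hjn hij t ht
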